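/- arXiv:2602.21827 — 3 statements merged into one kernel-verified Lean document; each statement's English description precedes it below -/
import Mathlib

section
/- Consider an ALG-schedule and a time u at which Cl(u) ≠ ∅ and min_{j∈Cl(u)} p_j(u) ≤ ((1−α)/α)·min_{j∈N(u)} y_j(u) (a minimum over the empty set being +∞). Then the job k processed at time u satisfies k ∈ Cl(u) and p_k(u) ≤ p_j(u) for every j ∈ A(u); that is, the algorithm processes a job with shortest remaining processing time among all available jobs. -/
open MeasureTheory Set

open scoped Classical

noncomputable section

variable {J : Type*}

/-- Total work done on job `j` by time `u` under the schedule `σ`. -/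
def workDone (σ : ℝ → J → ℝ) (j : J) (u : ℝ) : ℝ := ∫ v in (0:ℝ)..u, σ v j

/-- Remaining processing time of job `j` at time `u`. -/
def remT (p : J → ℝ) (σ : ℝ → J → ℝ) (j : J) (u : ℝ) : ℝ := p j - workDone σ j u

/-- Completion time of job `j`: the least `u` with `workDone σ j u = p j`,
    and `⊤` if the job never completes. -/
def cTime (p : J → ℝ) (σ : ℝ → J → ℝ) (j : J) : EReal :=
  sInf ((fun v : ℝ => (v : EReal)) '' {v : ℝ | workDone σ j v = p j})

/-- Job `j` is available at time `u`: released and not yet completed. -/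
def availAt (r p : J → ℝ) (σ : ℝ → J → ℝ) (u : ℝ) (j : J) : Prop :=
  r j ≤ u ∧ (u : EReal) < cTime p σ j

/-- Job `j` is processed at time `u`. -/
def procAt (σ : ℝ → J → ℝ) (u : ℝ) (j : J) : Prop := 0 < σ u j

/-- Job `j` is non-clairvoyant at time `u`. -/
def ncAt (r p : J → ℝ) (α : ℝ) (σ : ℝ → J → ℝ) (u : ℝ) (j : J) : Prop :=
  availAt r p σ u j ∧ workDone σ j u ≤ α * p j

/-- Job `j` is clairvoyant at time `u`. -/
def clAt (r p : J → ℝ) (α : ℝ) (σ : ℝ → J → ℝ) (u : ℝ) (j : J) : Prop :=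
  availAt r p σ u j ∧ α * p j < workDone σ j u

/-- The time at which job `j` emits its signal: the least `u` with
    `workDone σ j u = α * p j`. -/
def emitT (p : J → ℝ) (α : ℝ) (σ : ℝ → J → ℝ) (j : J) : ℝ :=
  sInf {u : ℝ | workDone σ j u = α * p j}

/-- Data of an instance: nonnegative release dates, positive processing times
    and `α ∈ (0,1)`. -/
structure IsInstance (r p : J → ℝ) (α : ℝ) : Prop where
  r_nonneg : ∀ j, 0 ≤ r j
  p_pos : ∀ j, 0 < p j
  alpha_mem : α ∈ Set.Ioo (0 : ℝ) 1

/-- `σ` is a (feasible, preemptive, single machine) schedule. -/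
structure IsSchedule [Fintype J] (r p : J → ℝ) (σ : ℝ → J → ℝ) : Prop where
  meas : ∀ j, Measurable fun u => σ u j
  nonneg : ∀ u j, 0 ≤ σ u j
  sum_le_one : ∀ u, ∑ j, σ u j ≤ 1
  zero_before_release : ∀ u j, u < r j → σ u j = 0
  workDone_le : ∀ u j, workDone σ j u ≤ p j

/-- A schedule is non-idling if it uses the full machine capacity whenever
    some job is available. -/
def NonIdling [Fintype J] (r p : J → ℝ) (σ : ℝ → J → ℝ) : Prop :=
  ∀ u, (∃ j, availAt r p σ u j) → ∑ j, σ u j = 1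

/-- The SRPT condition at time `u`: `Cl(u) ≠ ∅` and
    `min_{j ∈ Cl(u)} p_j(u) ≤ ((1-α)/α) · min_{j ∈ N(u)} y_j(u)`
    (the minimum over the empty set being `+∞`). -/
def SrptCond (r p : J → ℝ) (α : ℝ) (σ : ℝ → J → ℝ) (u : ℝ) : Prop :=
  ∃ k, clAt r p α σ u k ∧
    ∀ j, ncAt r p α σ u j → remT p σ k u ≤ ((1 - α) / α) * workDone σ j u

/-- `k` is a clairvoyant job of minimal remaining processing time at `u`,
    emitting last among those. -/
def IsSrptChoice (r p : J → ℝ) (α : ℝ) (σ : ℝ → J → ℝ) (u : ℝ) (k : J) : Prop :=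
  clAt r p α σ u k ∧
    (∀ j, clAt r p α σ u j → remT p σ k u ≤ remT p σ j u) ∧
    (∀ j, clAt r p α σ u j → remT p σ j u = remT p σ k u →
      emitT p α σ j ≤ emitT p α σ k)

/-- `j` is a non-clairvoyant job with minimal progress at time `u`. -/
def IsMinNc (r p : J → ℝ) (α : ℝ) (σ : ℝ → J → ℝ) (u : ℝ) (j : J) : Prop :=
  ncAt r p α σ u j ∧ ∀ j', ncAt r p α σ u j' → workDone σ j u ≤ workDone σ j' u

/-- `σ` is an ALG-schedule: non-idling, and at any time with available jobs it
    either runs a single clairvoyant job of shortest remaining processing time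
    (breaking ties by latest emission) when the SRPT condition holds, or it runs
    exactly the non-clairvoyant jobs of minimal progress at equal rates. -/
structure IsALG [Fintype J] (r p : J → ℝ) (α : ℝ) (σ : ℝ → J → ℝ) : Prop where
  sched : IsSchedule r p σ
  nonidling : NonIdling r p σ
  srpt_branch : ∀ u, (∃ j, availAt r p σ u j) → SrptCond r p α σ u →
    ∃ k, IsSrptChoice r p α σ u k ∧ ∀ j, j ≠ k → σ u j = 0
  setf_branch : ∀ u, (∃ j, availAt r p σ u j) → ¬ SrptCond r p α σ u →
    (∀ j, procAt σ u j → IsMinNc r p α σ u j) ∧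
    (∀ j j', IsMinNc r p α σ u j → IsMinNc r p α σ u j' → σ u j = σ u j')

/-- Right endpoint `min (C_j, t)` of the lifetime of `j` w.r.t. reference time `t`. -/
def lifeEnd (p : J → ℝ) (σ : ℝ → J → ℝ) (t : ℝ) (j : J) : ℝ :=
  (min (cTime p σ j) (t : EReal)).toReal

/-- The lifetime `I_j = [r j, min (C_j, t)]` of job `j`. -/
def lifetime (r p : J → ℝ) (σ : ℝ → J → ℝ) (t : ℝ) (j : J) : Set ℝ :=
  Set.Icc (r j) (lifeEnd p σ t j)

/-- `E_N`-edge of the borrow graph: `i` is processed at some time of `I_j`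
    while being non-clairvoyant. -/
def ENedge (r p : J → ℝ) (α : ℝ) (σ : ℝ → J → ℝ) (t : ℝ) (j i : J) : Prop :=
  ∃ u ∈ lifetime r p σ t j, procAt σ u i ∧ ncAt r p α σ u i

/-- `E_C`-edge of the borrow graph: `i` is processed at some time of `I_j`
    while being clairvoyant. -/
def ECedge (r p : J → ℝ) (α : ℝ) (σ : ℝ → J → ℝ) (t : ℝ) (j i : J) : Prop :=
  ∃ u ∈ lifetime r p σ t j, procAt σ u i ∧ clAt r p α σ u i

/-- Edge of the borrow graph `G_B`. -/
def borrowEdge (r p : J → ℝ) (α : ℝ) (σ : ℝ → J → ℝ) (t : ℝ) (j i : J) : Prop :=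
  ENedge r p α σ t j i ∨ ECedge r p α σ t j i

/-- `reaches j i` iff `i ∈ R_j`, i.e. `i` is reachable from `j` in the borrow
    graph (`j` itself included). -/
def reaches (r p : J → ℝ) (α : ℝ) (σ : ℝ → J → ℝ) (t : ℝ) : J → J → Prop :=
  Relation.ReflTransGen (borrowEdge r p α σ t)

/-- Truncated progress `ȳ_j = min (y_j(t), α p_j)`. -/
def truncY (p : J → ℝ) (α : ℝ) (σ : ℝ → J → ℝ) (t : ℝ) (j : J) : ℝ :=
  min (workDone σ j t) (α * p j)

end

section ALG

variable {J : Type*} {r p : J → ℝ} {α : ℝ} {σ : ℝ → J → ℝ} {u : ℝ}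

lemma ncAt.div_mul_workDone_le_remT {j : J} (hj : ncAt r p α σ u j) (hα : 0 < α) :
    (1 - α) / α * workDone σ j u ≤ remT p σ j u := by
  have hdiv : workDone σ j u / α ≤ p j := (div_le_iff₀' hα).mpr hj.2
  calc (1 - α) / α * workDone σ j u = workDone σ j u / α - workDone σ j u := by field_simp
    _ ≤ remT p σ j u := by rw [remT]; linarith

lemma IsALG.isSrptChoice_of_procAt [Fintype J] (halg : IsALG r p α σ)
    (hcond : SrptCond r p α σ u) {k : J} (hk : procAt σ u k) : IsSrptChoice r p α σ u k := by
  have havail : ∃ j, availAt r p σ u j := let ⟨k₀, hk₀, _⟩ := hcond; ⟨k₀, hk₀.1⟩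
  obtain ⟨k', hk', hidle⟩ := halg.srpt_branch u havail hcond
  obtain rfl : k = k' := by
    by_contra hne
    exact hk.ne' (hidle k hne)
  exact hk'

/-- A non-clairvoyant `j` has `p_j(u) ≥ (1 - α) p_j ≥ ((1 - α)/α) y_j(u)`, which by the SRPT
condition bounds the shortest clairvoyant remaining time from above. -/
lemma IsSrptChoice.remT_le_of_availAt (hα : 0 < α) (hcond : SrptCond r p α σ u) {k : J}
    (hk : IsSrptChoice r p α σ u k) {j : J} (hj : availAt r p σ u j) :
    remT p σ k u ≤ remT p σ j u := by
  by_cases hjc : α * p j < workDone σ j u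
  · exact hk.2.1 j ⟨hj, hjc⟩
  · have hjn : ncAt r p α σ u j := ⟨hj, not_lt.mp hjc⟩
    obtain ⟨k₀, hk₀, hk₀_le⟩ := hcond
    calc remT p σ k u ≤ remT p σ k₀ u := hk.2.1 k₀ hk₀
      _ ≤ (1 - α) / α * workDone σ j u := hk₀_le j hjn
      _ ≤ remT p σ j u := hjn.div_mul_workDone_le_remT hα

end ALG

theorem stmt0_general {J : Type*} [Fintype J] {r p : J → ℝ} {α : ℝ} {σ : ℝ → J → ℝ}
    (hinst : IsInstance r p α) (halg : IsALG r p α σ) (u : ℝ)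
    (hcond : SrptCond r p α σ u)
    (k : J) (hk : procAt σ u k) :
    clAt r p α σ u k ∧ ∀ j, availAt r p σ u j → remT p σ k u ≤ remT p σ j u := by
  have hchoice := halg.isSrptChoice_of_procAt hcond hk
  exact ⟨hchoice.1, fun j hj => hchoice.remT_le_of_availAt hinst.alpha_mem.1 hcond hj⟩

/-- If at time `u` the SRPT condition holds (in particular
`Cl(u) ≠ ∅`), then the job `k` processed at `u` is clairvoyant and has shortest
remaining processing time among all available jobs. -/
theorem stmt0 {J : Type*} [Fintype J] {r p : J → ℝ} {α : ℝ} {σ : ℝ → J → ℝ}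
    (hinst : IsInstance r p α) (halg : IsALG r p α σ) (u : ℝ)
    (hcl : ∃ j, clAt r p α σ u j) (hcond : SrptCond r p α σ u)
    (k : J) (hk : procAt σ u k) :
    clAt r p α σ u k ∧ ∀ j, availAt r p σ u j → remT p σ k u ≤ remT p σ j u :=
  stmt0_general hinst halg u hcond k hk
end

section
/- (Catch-Up) Consider an ALG-schedule. If job i is processed at a time u' and j, i ∈ N(u'), then y_j(u'') ≥ y_i(u'') for all times u'' ≥ u' such that j, i ∈ N(u''). -/
/-! Let `s` be the last time in `[u', u'']` with `y_i(s) ≤ y_j(s)`; it exists because the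
progress functions are continuous. After `s` job `i` is strictly behind `j`, so the ALG rule never
processes it there: `y_i` stays constant on `[s, u'']` while `y_j` can only grow. -/

open MeasureTheory Set

open scoped Classical

lemma exists_last_nonneg_of_continuousOn {f : ℝ → ℝ} {a b : ℝ} (hab : a ≤ b)
    (hf : ContinuousOn f (Icc a b)) (ha : 0 ≤ f a) :
    ∃ s ∈ Icc a b, 0 ≤ f s ∧ ∀ v ∈ Ioc s b, f v < 0 := by
  set S := Icc a b ∩ f ⁻¹' Ici 0
  have hS : sSup S ∈ S :=
    (hf.preimage_isClosed_of_isClosed isClosed_Icc isClosed_Ici).csSup_mem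
      ⟨a, ⟨le_rfl, hab⟩, ha⟩ ⟨b, fun x hx => hx.1.2⟩
  refine ⟨sSup S, hS.1, hS.2, fun v hv => ?_⟩
  by_contra! hfv
  have hvS : v ∈ S := ⟨⟨hS.1.1.trans hv.1.le, hv.2⟩, hfv⟩
  exact (le_csSup ⟨b, fun x hx => hx.1.2⟩ hvS).not_gt hv.1

namespace IsSchedule

variable {J : Type*} [Fintype J] {r p : J → ℝ} {σ : ℝ → J → ℝ}

lemma le_one (hs : IsSchedule r p σ) (u : ℝ) (j : J) : σ u j ≤ 1 :=
  (Finset.single_le_sum (fun k _ => hs.nonneg u k) (Finset.mem_univ j)).trans (hs.sum_le_one u)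

lemma intervalIntegrable (hs : IsSchedule r p σ) (j : J) (a b : ℝ) :
    IntervalIntegrable (fun u => σ u j) volume a b := by
  refine (intervalIntegrable_const (c := (1 : ℝ))).mono_fun'
    (hs.meas j).aestronglyMeasurable.restrict (Filter.Eventually.of_forall fun u => ?_)
  simpa only [Real.norm_eq_abs, abs_of_nonneg (hs.nonneg u j)] using hs.le_one u j

lemma workDone_sub_workDone (hs : IsSchedule r p σ) (j : J) (a b : ℝ) :
    workDone σ j b - workDone σ j a = ∫ v in a..b, σ v j :=
  intervalIntegral.integral_interval_sub_left (hs.intervalIntegrable j 0 b)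
    (hs.intervalIntegrable j 0 a)

lemma monotone_workDone (hs : IsSchedule r p σ) (j : J) : Monotone (workDone σ j) := by
  intro a b hab
  have := hs.workDone_sub_workDone j a b
  have : 0 ≤ ∫ v in a..b, σ v j := intervalIntegral.integral_nonneg hab fun u _ => hs.nonneg u j
  linarith

lemma continuous_workDone (hs : IsSchedule r p σ) (j : J) : Continuous (workDone σ j) :=
  intervalIntegral.continuous_primitive (hs.intervalIntegrable j) 0

lemma workDone_eq_of_forall_eq_zero (hs : IsSchedule r p σ) {j : J} {a b : ℝ} (hab : a ≤ b)
    (hzero : ∀ v ∈ Ioc a b, σ v j = 0) : workDone σ j b = workDone σ j a := by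
  have hint : ∫ v in a..b, σ v j = 0 :=
    intervalIntegral.integral_zero_ae (Filter.Eventually.of_forall fun v hv =>
      hzero v (by rwa [uIoc_of_le hab] at hv))
  linarith [hs.workDone_sub_workDone j a b]

lemma ncAt_of_mem_Icc (hs : IsSchedule r p σ) {α a b v : ℝ} {j : J}
    (ha : ncAt r p α σ a j) (hb : ncAt r p α σ b j) (hv : v ∈ Icc a b) : ncAt r p α σ v j :=
  ⟨⟨ha.1.1.trans hv.1, (EReal.coe_le_coe_iff.mpr hv.2).trans_lt hb.1.2⟩,
    (hs.monotone_workDone j hv.2).trans hb.2⟩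

end IsSchedule

/-- Under the SRPT branch only a clairvoyant job runs, so a processed non-clairvoyant job is
run by the SETF branch, which picks it among the non-clairvoyant jobs of least progress. -/
lemma IsALG.workDone_le_of_procAt {J : Type*} [Fintype J] {r p : J → ℝ} {α : ℝ}
    {σ : ℝ → J → ℝ} (halg : IsALG r p α σ) {v : ℝ} {i j : J}
    (hiproc : procAt σ v i) (hiN : ncAt r p α σ v i) (hjN : ncAt r p α σ v j) :
    workDone σ i v ≤ workDone σ j v := by
  have hav : ∃ k, availAt r p σ v k := ⟨i, hiN.1⟩
  by_cases hsrpt : SrptCond r p α σ v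
  · obtain ⟨k, hk, hidle⟩ := halg.srpt_branch v hav hsrpt
    have hik : i ≠ k := by
      rintro rfl
      exact hk.1.2.not_ge hiN.2
    exact absurd (hidle i hik) hiproc.ne'
  · exact ((halg.setf_branch v hav hsrpt).1 i hiproc).2 j hjN

theorem stmt3_general {J : Type*} [Fintype J] {r p : J → ℝ} {α : ℝ} {σ : ℝ → J → ℝ}
    (halg : IsALG r p α σ) (u' : ℝ) (i j : J)
    (hiproc : procAt σ u' i) (hjN : ncAt r p α σ u' j) (hiN : ncAt r p α σ u' i) :
    ∀ u'' : ℝ, u' ≤ u'' → ncAt r p α σ u'' j → ncAt r p α σ u'' i →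
      workDone σ i u'' ≤ workDone σ j u'' := by
  intro u'' hle hjN'' hiN''
  have hs := halg.sched
  obtain ⟨s, hsI, hs_nonneg, hafter⟩ := exists_last_nonneg_of_continuousOn
    (f := fun u => workDone σ j u - workDone σ i u) hle
    ((hs.continuous_workDone j).sub (hs.continuous_workDone i)).continuousOn
    (sub_nonneg.mpr (halg.workDone_le_of_procAt hiproc hiN hjN))
  have hidle : ∀ v ∈ Ioc s u'', σ v i = 0 := by
    intro v hv
    have hvI : v ∈ Icc u' u'' := ⟨hsI.1.trans hv.1.le, hv.2⟩
    by_contra hne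
    have hproc : procAt σ v i := (hs.nonneg v i).lt_of_ne' hne
    have := halg.workDone_le_of_procAt hproc (hs.ncAt_of_mem_Icc hiN hiN'' hvI)
      (hs.ncAt_of_mem_Icc hjN hjN'' hvI)
    linarith [hafter v hv]
  calc workDone σ i u'' = workDone σ i s := hs.workDone_eq_of_forall_eq_zero hsI.2 hidle
    _ ≤ workDone σ j s := sub_nonneg.mp hs_nonneg
    _ ≤ workDone σ j u'' := hs.monotone_workDone j hsI.2

/-- **Catch-Up.** If job `i` is processed at time `u'` and
`j, i ∈ N(u')`, then `y_j(u'') ≥ y_i(u'')` for all `u'' ≥ u'` with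
`j, i ∈ N(u'')`. -/
theorem stmt3 {J : Type*} [Fintype J] {r p : J → ℝ} {α : ℝ} {σ : ℝ → J → ℝ}
    (hinst : IsInstance r p α) (halg : IsALG r p α σ) (u' : ℝ) (i j : J)
    (hiproc : procAt σ u' i) (hjN : ncAt r p α σ u' j) (hiN : ncAt r p α σ u' i) :
    ∀ u'' : ℝ, u' ≤ u'' → ncAt r p α σ u'' j → ncAt r p α σ u'' i →
      workDone σ i u'' ≤ workDone σ j u'' :=
  stmt3_general halg u' i j hiproc hjN hiN
end

section
/- Let σ be any schedule and t ≥ 0 a reference time. Let j_1, …, j_m be a path in the borrow graph G_B (each consecutive pair joined by an E_N- or E_C-edge), and assume r j_a ≤ t for every a. Then ⋃_{a=1}^m I_{j_a} = [min_{1≤a≤m} r j_a, max_{1≤a≤m} min(C_{j_a}, t)]. -/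
open MeasureTheory Set

open scoped Classical

/-!
Along a path in the borrow graph, consecutive lifetimes meet: an edge `(j, i)` means that `i`
is processed at some `u ∈ I_j`, so `i` is available at `u ≤ t` and `u ∈ I_i` as well. A chain
of pairwise overlapping intervals has a connected union, and a connected subset of `ℝ`
containing the smallest left endpoint and the largest right endpoint is the whole interval
between them.
-/

section Order

variable {α ι : Type*}

theorem IsConnected.iUnion_of_fin_chain [TopologicalSpace α] {m : ℕ} {s : Fin (m + 1) → Set α}
    (H : ∀ i, IsConnected (s i)) (K : ∀ i : Fin m, (s i.castSucc ∩ s i.succ).Nonempty) :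
    IsConnected (⋃ i, s i) := by
  refine IsConnected.iUnion_of_chain H fun i => ?_
  induction i using Fin.lastCases with
  | last => simpa [Fin.orderSucc_last] using (H (Fin.last m)).nonempty
  | cast i => simpa [Fin.orderSucc_castSucc] using K i

theorem iUnion_Icc_eq_Icc_of_isPreconnected [ConditionallyCompleteLinearOrder α]
    [TopologicalSpace α] [OrderTopology α] [Finite ι] [Nonempty ι] {a b : ι → α}
    (hab : ∀ i, a i ≤ b i) (hconn : IsPreconnected (⋃ i, Icc (a i) (b i))) :
    ⋃ i, Icc (a i) (b i) = Icc (⨅ i, a i) (⨆ i, b i) := by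
  refine Subset.antisymm (iUnion_subset fun i => Icc_subset_Icc ?_ ?_) ?_
  · exact ciInf_le (finite_range a).bddBelow i
  · exact le_ciSup (finite_range b).bddAbove i
  · obtain ⟨i₀, hi₀⟩ := exists_eq_ciInf_of_finite (f := a)
    obtain ⟨i₁, hi₁⟩ := exists_eq_ciSup_of_finite (f := b)
    refine hconn.Icc_subset (mem_iUnion_of_mem i₀ ?_) (mem_iUnion_of_mem i₁ ?_)
    · exact hi₀ ▸ left_mem_Icc.2 (hab i₀)
    · exact hi₁ ▸ right_mem_Icc.2 (hab i₁)

end Order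

section Lifetime

variable {J : Type*} [Fintype J] {r p : J → ℝ} {α : ℝ} {σ : ℝ → J → ℝ}

theorem workDone_nonpos_of_lt_release (hs : IsSchedule r p σ) {j : J} {v : ℝ} (hv : v < r j) :
    workDone σ j v ≤ 0 := by
  rcases le_or_gt v 0 with h0 | h0
  · rw [workDone, intervalIntegral.integral_symm, neg_nonpos]
    exact intervalIntegral.integral_nonneg h0 fun u _ => hs.nonneg u j
  · have hzero : EqOn (fun u => σ u j) 0 (uIcc 0 v) := fun u hu =>
      hs.zero_before_release u j (((uIcc_of_le h0.le ▸ hu).2).trans_lt hv)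
    rw [workDone, intervalIntegral.integral_congr hzero]
    simp

theorem coe_release_le_cTime (hs : IsSchedule r p σ) {j : J} (hp : 0 < p j) :
    (r j : EReal) ≤ cTime p σ j := by
  refine le_sInf ?_
  rintro _ ⟨v, hv, rfl⟩
  by_contra! hvr
  have hv : workDone σ j v = p j := hv
  linarith [workDone_nonpos_of_lt_release hs (EReal.coe_lt_coe_iff.1 hvr)]

theorem coe_lifeEnd (hs : IsSchedule r p σ) {j : J} (hp : 0 < p j) (t : ℝ) :
    (lifeEnd p σ t j : EReal) = min (cTime p σ j) t := by
  refine EReal.coe_toReal (ne_top_of_le_ne_top (EReal.coe_ne_top t) (min_le_right _ _)) ?_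
  -- `toReal` would send `⊥` to `0`; the release date bounds `C_j` from below.
  exact ne_bot_of_gt (lt_min ((EReal.bot_lt_coe _).trans_le (coe_release_le_cTime hs hp))
    (EReal.bot_lt_coe t))

theorem le_lifeEnd_iff (hs : IsSchedule r p σ) {j : J} (hp : 0 < p j) {t x : ℝ} :
    x ≤ lifeEnd p σ t j ↔ (x : EReal) ≤ cTime p σ j ∧ x ≤ t := by
  rw [← EReal.coe_le_coe_iff, coe_lifeEnd hs hp, le_min_iff, EReal.coe_le_coe_iff]

theorem release_le_lifeEnd (hs : IsSchedule r p σ) {j : J} (hp : 0 < p j) {t : ℝ}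
    (hrt : r j ≤ t) : r j ≤ lifeEnd p σ t j :=
  (le_lifeEnd_iff hs hp).2 ⟨coe_release_le_cTime hs hp, hrt⟩

theorem mem_lifetime_of_availAt (hs : IsSchedule r p σ) {i : J} (hp : 0 < p i) {t u : ℝ}
    (hav : availAt r p σ u i) (hut : u ≤ t) : u ∈ lifetime r p σ t i :=
  ⟨hav.1, (le_lifeEnd_iff hs hp).2 ⟨hav.2.le, hut⟩⟩

theorem borrowEdge.lifetime_inter_nonempty (hinst : IsInstance r p α) (hs : IsSchedule r p σ)
    {t : ℝ} {j i : J} (h : borrowEdge r p α σ t j i) :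
    (lifetime r p σ t j ∩ lifetime r p σ t i).Nonempty := by
  obtain ⟨u, hu, -, hav, -⟩ | ⟨u, hu, -, hav, -⟩ := h <;>
  · have hut : u ≤ t := ((le_lifeEnd_iff hs (hinst.p_pos j)).1 hu.2).2
    exact ⟨u, hu, mem_lifetime_of_availAt hs (hinst.p_pos i) hav hut⟩

end Lifetime

theorem stmt5_general {J : Type*} [Fintype J] {r p : J → ℝ} {α : ℝ} {σ : ℝ → J → ℝ}
    (hinst : IsInstance r p α) (hs : IsSchedule r p σ) (t : ℝ)
    (m : ℕ) (P : Fin (m + 1) → J)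
    (hpath : ∀ a : Fin m, borrowEdge r p α σ t (P a.castSucc) (P a.succ))
    (hrel : ∀ a, r (P a) ≤ t) :
    (⋃ a, lifetime r p σ t (P a)) =
      Set.Icc (⨅ a, r (P a)) (⨆ a, lifeEnd p σ t (P a)) := by
  have hle : ∀ a, r (P a) ≤ lifeEnd p σ t (P a) :=
    fun a => release_le_lifeEnd hs (hinst.p_pos _) (hrel a)
  have hconn : IsConnected (⋃ a, lifetime r p σ t (P a)) :=
    IsConnected.iUnion_of_fin_chain (fun a => isConnected_Icc (hle a))
      fun a => (hpath a).lifetime_inter_nonempty hinst hs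
  exact iUnion_Icc_eq_Icc_of_isPreconnected hle hconn.isPreconnected

/-- For any schedule and any path `P 0, …, P m` in the borrow
graph whose jobs all release before `t`, the union of the lifetimes along the
path is the interval `[min_a r (P a), max_a min (C_{P a}, t)]`. -/
theorem stmt5 {J : Type*} [Fintype J] {r p : J → ℝ} {α : ℝ} {σ : ℝ → J → ℝ}
    (hinst : IsInstance r p α) (hs : IsSchedule r p σ) (t : ℝ) (ht : 0 ≤ t)
    (m : ℕ) (P : Fin (m + 1) → J)
    (hpath : ∀ a : Fin m, borrowEdge r p α σ t (P a.castSucc) (P a.succ))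
    (hrel : ∀ a, r (P a) ≤ t) :
    (⋃ a, lifetime r p σ t (P a)) =
      Set.Icc (⨅ a, r (P a)) (⨆ a, lifeEnd p σ t (P a)) :=
  stmt5_general hinst hs t m P hpath hrel
end
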